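/- arXiv:1408.0402 — 8 statements merged into one kernel-verified Lean document; each statement's English description precedes it below -/
import Mathlib

section
/- The ternary cubic form F_0(y_1,y_2,y_3) = -6y_1y_2y_3 + y_1(y_1^2+3y_2^2+3y_3^2) + y_2(y_1^2+3y_2^2+9y_3^2) + 3y_3(y_1^2+y_2^2+3y_3^2) is non-singular over the rationals: the only simultaneous rational solution of ∂F_0/∂y_1 = ∂F_0/∂y_2 = ∂F_0/∂y_3 = 0 is y_1 = y_2 = y_3 = 0. -/
/-- The ternary cubic form `F₀` from Euler's parametrisation of the Fermat cubic
is non-singular over `ℚ`: the only rational common zero of its three partial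
derivatives is the origin. -/
theorem stmt_2 (y1 y2 y3 : ℚ)
    (h1 : 3 * y1 ^ 2 + 3 * y2 ^ 2 + 3 * y3 ^ 2 + 2 * y1 * y2 + 6 * y1 * y3 - 6 * y2 * y3 = 0)
    (h2 : y1 ^ 2 + 9 * y2 ^ 2 + 9 * y3 ^ 2 + 6 * y1 * y2 - 6 * y1 * y3 + 6 * y2 * y3 = 0)
    (h3 : 3 * y1 ^ 2 + 3 * y2 ^ 2 + 27 * y3 ^ 2 - 6 * y1 * y2 + 6 * y1 * y3 + 18 * y2 * y3 = 0) :
    y1 = 0 ∧ y2 = 0 ∧ y3 = 0 := by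
  refine ⟨?_, ?_, ?_⟩ <;>
    nlinarith [sq_nonneg (y1 - y2), sq_nonneg (y1 + y2), sq_nonneg (y1 + y3),
      sq_nonneg (y2 + y3), sq_nonneg (y1 - y3), sq_nonneg (y2 - y3),
      sq_nonneg y1, sq_nonneg y2, sq_nonneg y3, sq_nonneg (y1 + y2 + 3*y3),
      sq_nonneg (y1 - y2 + 3*y3)]
end

section
/- Suppose rational numbers y_1, y_2, y_3 satisfy y_1^2 = 3y_2y_3 - 3y_1y_3, y_2^2 = y_1y_3 - y_1y_2, and 3y_3^2 = y_1y_2 - 3y_2y_3. Then y_1 = y_2 = y_3 = 0. -/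
/-- If rationals satisfy `y₁² = 3y₂y₃ - 3y₁y₃`, `y₂² = y₁y₃ - y₁y₂` and
`3y₃² = y₁y₂ - 3y₂y₃`, then they all vanish. -/
theorem stmt_3 (y1 y2 y3 : ℚ)
    (h1 : y1 ^ 2 = 3 * y2 * y3 - 3 * y1 * y3)
    (h2 : y2 ^ 2 = y1 * y3 - y1 * y2)
    (h3 : 3 * y3 ^ 2 = y1 * y2 - 3 * y2 * y3) :
    y1 = 0 ∧ y2 = 0 ∧ y3 = 0 := by
  have key : (y1 + y3) ^ 2 + y2 ^ 2 + 2 * y3 ^ 2 = 0 := by ring_nf; nlinarith [h1, h2, h3]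
  have h3' : y3 = 0 := by nlinarith [sq_nonneg (y1 + y3), sq_nonneg y2, sq_nonneg y3]
  have h2' : y2 = 0 := by nlinarith [sq_nonneg (y1 + y3), sq_nonneg y3]
  have h1' : y1 = 0 := by nlinarith [sq_nonneg y2, sq_nonneg y3]
  exact ⟨h1', h2', h3'⟩
end

section
/- Suppose rational numbers y_2, y_3 satisfy both y_2^3 + 3y_2^2 y_3 - 3y_3^3 = 0 and y_2^3 - 6y_2^2 y_3 + 9y_2 y_3^2 - 3y_3^3 = 0. Then y_2 = y_3 = 0. -/
/-- The pair of cubics `y₂³ + 3y₂²y₃ - 3y₃³ = 0` and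
`y₂³ - 6y₂²y₃ + 9y₂y₃² - 3y₃³ = 0` has only the trivial rational solution. -/
theorem stmt_4 (y2 y3 : ℚ)
    (h1 : y2 ^ 3 + 3 * y2 ^ 2 * y3 - 3 * y3 ^ 3 = 0)
    (h2 : y2 ^ 3 - 6 * y2 ^ 2 * y3 + 9 * y2 * y3 ^ 2 - 3 * y3 ^ 3 = 0) :
    y2 = 0 ∧ y3 = 0 := by
  have key : y2 * y3 * (y2 - y3) = 0 := by nlinarith [h1, h2]
  rcases mul_eq_zero.1 key with h | h
  · rcases mul_eq_zero.1 h with h | h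
    · subst h
      have h3 : y3 ^ 3 = 0 := by linarith [h1]
      exact ⟨rfl, pow_eq_zero_iff (by norm_num) |>.1 h3⟩
    · subst h
      have h3 : y2 ^ 3 = 0 := by linarith [h1]
      exact ⟨pow_eq_zero_iff (by norm_num) |>.1 h3, rfl⟩
  · have he : y2 = y3 := by linarith [sub_eq_zero.1 h]
    subst he
    have h3 : y2 ^ 3 = 0 := by linarith [h1]
    have := pow_eq_zero_iff (n := 3) (by norm_num) |>.1 h3
    exact ⟨this, this⟩
end

section
/- Let y_0, y_1, y_2, y_3 be nonzero integers with y_0 + y_1 + y_2 + y_3 = 0, pairwise coprime, and such that none of y_0+y_1, y_0+y_2, y_1+y_3 vanishes. Define x_0 = y_1y_2y_3, x_1 = y_0y_2y_3, x_2 = y_0y_1y_3, x_3 = y_0y_1y_2. Then (x_0,x_1,x_2,x_3) satisfies x_1x_2x_3 + x_0x_2x_3 + x_0x_1x_3 + x_0x_1x_2 = 0, gcd(x_0,x_1,x_2,x_3) = 1, and no two of x_0,x_1,x_2,x_3 sum to zero. -/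
/-! The point on the cubic is an identity: dividing by `x₀x₁x₂x₃ = (y₀y₁y₂y₃)³`, the cubic reads
`∑ 1/xᵢ = 0`, i.e. `∑ yᵢ = 0`. Primitivity: from `x₀, x₁` and a Bézout relation for `y₀, y₁` one
obtains `y₂y₃` as an integral combination, likewise `y₀y₁` from `x₂, x₃`, and these two products are
coprime. Finally `xᵢ + xⱼ = yₖyₗ(yᵢ + yⱼ)`, and `y₀ + y₃ = -(y₁ + y₂)`
cannot vanish: otherwise `y₀ ∣ y₃` and `y₁ ∣ y₂` force `y₀, y₁ = ±1`, so
that `y₀ + y₁ = 0` or `y₀ + y₂ = y₀ - y₁ = 0`. -/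

theorem IsCoprime.dvd_of_dvd_mul_of_dvd_mul {R : Type*} [CommRing R] {a b c d : R}
    (hab : IsCoprime a b) (ha : d ∣ a * c) (hb : d ∣ b * c) : d ∣ c := by
  obtain ⟨u, v, huv⟩ := hab
  have hc : c = u * (a * c) + v * (b * c) := by linear_combination (-c) * huv
  rw [hc]
  exact dvd_add (dvd_mul_of_dvd_right ha u) (dvd_mul_of_dvd_right hb v)

theorem IsCoprime.isUnit_of_add_eq_zero {R : Type*} [CommRing R] {a b : R}
    (hab : IsCoprime a b) (h : a + b = 0) : IsUnit a := by
  rw [eq_neg_of_add_eq_zero_right h, IsCoprime.neg_right_iff] at hab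
  exact isCoprime_self.mp hab

theorem isUnit_of_dvd_torsor_monomials {R : Type*} [CommRing R] {y₀ y₁ y₂ y₃ d : R}
    (h01 : IsCoprime y₀ y₁) (h02 : IsCoprime y₀ y₂) (h03 : IsCoprime y₀ y₃)
    (h12 : IsCoprime y₁ y₂) (h13 : IsCoprime y₁ y₃) (h23 : IsCoprime y₂ y₃)
    (d₀ : d ∣ y₁ * y₂ * y₃) (d₁ : d ∣ y₀ * y₂ * y₃) (d₂ : d ∣ y₀ * y₁ * y₃)
    (d₃ : d ∣ y₀ * y₁ * y₂) : IsUnit d := by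
  have d₂₃ : d ∣ y₂ * y₃ :=
    h01.dvd_of_dvd_mul_of_dvd_mul (by rwa [← mul_assoc]) (by rwa [← mul_assoc])
  have d₀₁ : d ∣ y₀ * y₁ :=
    h23.dvd_of_dvd_mul_of_dvd_mul (by rwa [mul_comm]) (by rwa [mul_comm])
  have hco : IsCoprime (y₂ * y₃) (y₀ * y₁) :=
    (h02.symm.mul_right h12.symm).mul_left (h03.symm.mul_right h13.symm)
  exact hco.isUnit_of_dvd' d₂₃ d₀₁

theorem Int.add_ne_zero_of_add_add_add_eq_zero {a b c d : ℤ} (hsum : a + b + c + d = 0)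
    (had : IsCoprime a d) (hbc : IsCoprime b c) (hab : a + b ≠ 0) (hac : a + c ≠ 0) :
    a + d ≠ 0 := by
  intro h
  rcases Int.isUnit_iff.mp (had.isUnit_of_add_eq_zero h) with rfl | rfl <;>
    rcases Int.isUnit_iff.mp (hbc.isUnit_of_add_eq_zero (by omega)) with rfl | rfl <;> omega

/-- Universal torsor parametrisation of the Cayley cubic with all `z`-variables
equal to 1: pairwise coprime nonzero integers `y₀,…,y₃` summing to zero, with
`y₀+y₁, y₀+y₂, y₁+y₃` all nonzero, give a primitive integral point on the Cayley
cubic off the lines. -/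
theorem stmt_5 (y0 y1 y2 y3 : ℤ)
    (hy0 : y0 ≠ 0) (hy1 : y1 ≠ 0) (hy2 : y2 ≠ 0) (hy3 : y3 ≠ 0)
    (hsum : y0 + y1 + y2 + y3 = 0)
    (h01 : IsCoprime y0 y1) (h02 : IsCoprime y0 y2) (h03 : IsCoprime y0 y3)
    (h12 : IsCoprime y1 y2) (h13 : IsCoprime y1 y3) (h23 : IsCoprime y2 y3)
    (hl1 : y0 + y1 ≠ 0) (hl2 : y0 + y2 ≠ 0) (hl3 : y1 + y3 ≠ 0) :
    let x0 := y1 * y2 * y3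
    let x1 := y0 * y2 * y3
    let x2 := y0 * y1 * y3
    let x3 := y0 * y1 * y2
    x1 * x2 * x3 + x0 * x2 * x3 + x0 * x1 * x3 + x0 * x1 * x2 = 0 ∧
    Int.gcd (Int.gcd (Int.gcd x0 x1) x2) x3 = 1 ∧
    x0 + x1 ≠ 0 ∧ x0 + x2 ≠ 0 ∧ x0 + x3 ≠ 0 ∧
    x1 + x2 ≠ 0 ∧ x1 + x3 ≠ 0 ∧ x2 + x3 ≠ 0 := by
  intro x0 x1 x2 x3
  have hl0 : y0 + y3 ≠ 0 := Int.add_ne_zero_of_add_add_add_eq_zero hsum h03 h12 hl1 hl2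
  have hgcd : Int.gcd (Int.gcd (Int.gcd x0 x1) x2) x3 = 1 := by
    set g := Int.gcd (Int.gcd (Int.gcd x0 x1) x2) x3
    have dg : (g : ℤ) ∣ Int.gcd (Int.gcd x0 x1) x2 := Int.gcd_dvd_left _ _
    have dg' : (g : ℤ) ∣ Int.gcd x0 x1 := dg.trans (Int.gcd_dvd_left _ _)
    have hunit := isUnit_of_dvd_torsor_monomials h01 h02 h03 h12 h13 h23
      (dg'.trans (Int.gcd_dvd_left _ _)) (dg'.trans (Int.gcd_dvd_right _ _))
      (dg.trans (Int.gcd_dvd_right _ _)) (Int.gcd_dvd_right _ _)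
    exact Nat.isUnit_iff.mp (Int.ofNat_isUnit.mp hunit)
  refine ⟨by linear_combination (y0 * y1 * y2 * y3) ^ 2 * hsum, hgcd, ?_, ?_, ?_, ?_, ?_, ?_⟩
  · convert mul_ne_zero (mul_ne_zero hy2 hy3) hl1 using 1; ring
  · convert mul_ne_zero (mul_ne_zero hy1 hy3) hl2 using 1; ring
  · convert mul_ne_zero (mul_ne_zero hy1 hy2) hl0 using 1; ring
  · convert mul_ne_zero (mul_ne_zero hy0 hy3) (neg_ne_zero.mpr hl0) using 1
    linear_combination y0 * y3 * hsum
  · convert mul_ne_zero (mul_ne_zero hy0 hy2) hl3 using 1; ring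
  · convert mul_ne_zero (mul_ne_zero hy0 hy1) (neg_ne_zero.mpr hl1) using 1
    linear_combination y0 * y1 * hsum
end

section
/- Let p_0, p_1, p_2, p_3 be pairwise distinct primes (i.e. p_0p_1p_2p_3 is squarefree), and ε_0, ε_1, ε_2, ε_3 ∈ {1, -1} with ε_0p_0 + ε_1p_1 + ε_2p_2 + ε_3p_3 = 0. Set y_j = ε_j p_j and x_i = ∏_{j ≠ i} y_j. Then the point (x_0,x_1,x_2,x_3) is a primitive integral point on the Cayley cubic surface x_1x_2x_3 + x_0x_2x_3 + x_0x_1x_3 + x_0x_1x_2 = 0, and the product x_0x_1x_2x_3 has exactly 12 prime factors counted with multiplicity. -/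
open ArithmeticFunction

/-- Four pairwise distinct primes with signs summing to zero give a primitive
integral point on the Cayley cubic whose coordinate product has exactly 12
prime factors counted with multiplicity. -/
theorem stmt_6 (p : Fin 4 → ℕ) (ε : Fin 4 → ℤ)
    (hp : ∀ j, Nat.Prime (p j))
    (hdist : ∀ i j, i ≠ j → p i ≠ p j)
    (hε : ∀ j, ε j = 1 ∨ ε j = -1)
    (hsum : ∑ j, ε j * (p j : ℤ) = 0) :
    let y : Fin 4 → ℤ := fun j => ε j * (p j : ℤ)
    let x : Fin 4 → ℤ := fun i => ∏ j ∈ Finset.univ.erase i, y j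
    x 1 * x 2 * x 3 + x 0 * x 2 * x 3 + x 0 * x 1 * x 3 + x 0 * x 1 * x 2 = 0 ∧
    Int.gcd (Int.gcd (Int.gcd (x 0) (x 1)) (x 2)) (x 3) = 1 ∧
    (x 0 * x 1 * x 2 * x 3).natAbs.primeFactorsList.length = 12 := by
  intro y x
  have e0 : x 0 = y 1 * y 2 * y 3 := by
    show ∏ j ∈ Finset.univ.erase (0:Fin 4), y j = _
    rw [show Finset.univ.erase (0:Fin 4) = {1,2,3} from by decide]
    simp [Finset.prod_insert, mul_assoc]
  have e1 : x 1 = y 0 * y 2 * y 3 := by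
    show ∏ j ∈ Finset.univ.erase (1:Fin 4), y j = _
    rw [show Finset.univ.erase (1:Fin 4) = {0,2,3} from by decide]
    simp [Finset.prod_insert, mul_assoc]
  have e2 : x 2 = y 0 * y 1 * y 3 := by
    show ∏ j ∈ Finset.univ.erase (2:Fin 4), y j = _
    rw [show Finset.univ.erase (2:Fin 4) = {0,1,3} from by decide]
    simp [Finset.prod_insert, mul_assoc]
  have e3 : x 3 = y 0 * y 1 * y 2 := by
    show ∏ j ∈ Finset.univ.erase (3:Fin 4), y j = _
    rw [show Finset.univ.erase (3:Fin 4) = {0,1,2} from by decide]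
    simp [Finset.prod_insert, mul_assoc]
  have hy : ∀ j, y j = ε j * (p j : ℤ) := fun j => rfl
  have hsum' : y 0 + y 1 + y 2 + y 3 = 0 := by
    have := hsum; rw [Fin.sum_univ_four] at this; simpa [hy] using this
  have hyabs : ∀ j, (y j).natAbs = p j := by
    intro j
    rcases hε j with h | h <;> simp [hy, h]
  have a0 : (x 0).natAbs = p 1 * p 2 * p 3 := by
    rw [e0, Int.natAbs_mul, Int.natAbs_mul, hyabs, hyabs, hyabs]
  have a1 : (x 1).natAbs = p 0 * p 2 * p 3 := by
    rw [e1, Int.natAbs_mul, Int.natAbs_mul, hyabs, hyabs, hyabs]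
  have a2 : (x 2).natAbs = p 0 * p 1 * p 3 := by
    rw [e2, Int.natAbs_mul, Int.natAbs_mul, hyabs, hyabs, hyabs]
  have a3 : (x 3).natAbs = p 0 * p 1 * p 2 := by
    rw [e3, Int.natAbs_mul, Int.natAbs_mul, hyabs, hyabs, hyabs]
  refine ⟨?_, ?_, ?_⟩
  · rw [e0, e1, e2, e3]
    linear_combination (y 0 * y 1 * y 2 * y 3)^2 * hsum'
  · -- primitivity
    have hg : Int.gcd (Int.gcd (Int.gcd (x 0) (x 1)) (x 2)) (x 3)
        = Nat.gcd (Nat.gcd (Nat.gcd (p 1 * p 2 * p 3) (p 0 * p 2 * p 3)) (p 0 * p 1 * p 3)) (p 0 * p 1 * p 2) := by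
      simp [Int.gcd, a0, a1, a2, a3]
    rw [hg]
    by_contra h
    obtain ⟨q, hq, hqd⟩ := Nat.exists_prime_and_dvd h
    have d3 : q ∣ p 0 * p 1 * p 2 := hqd.trans (Nat.gcd_dvd_right _ _)
    have d2 : q ∣ p 0 * p 1 * p 3 :=
      hqd.trans ((Nat.gcd_dvd_left _ _).trans (Nat.gcd_dvd_right _ _))
    have d1 : q ∣ p 0 * p 2 * p 3 :=
      hqd.trans ((Nat.gcd_dvd_left _ _).trans ((Nat.gcd_dvd_left _ _).trans (Nat.gcd_dvd_right _ _)))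
    have d0 : q ∣ p 1 * p 2 * p 3 :=
      hqd.trans ((Nat.gcd_dvd_left _ _).trans ((Nat.gcd_dvd_left _ _).trans (Nat.gcd_dvd_left _ _)))
    have eqcase : ∀ a b c : Fin 4, q ∣ p a * p b * p c → q = p a ∨ q = p b ∨ q = p c := by
      intro a b c hd
      rcases (hq.dvd_mul.mp hd) with h' | h'
      · rcases (hq.dvd_mul.mp h') with h'' | h''
        · exact Or.inl ((Nat.prime_dvd_prime_iff_eq hq (hp a)).mp h'')
        · exact Or.inr (Or.inl ((Nat.prime_dvd_prime_iff_eq hq (hp b)).mp h''))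
      · exact Or.inr (Or.inr ((Nat.prime_dvd_prime_iff_eq hq (hp c)).mp h'))
    rcases eqcase _ _ _ d0 with h' | h' | h'
    · rcases eqcase _ _ _ d1 with h'' | h'' | h'' <;>
        exact hdist _ _ (by decide) (h' ▸ h'').symm
    · rcases eqcase _ _ _ d2 with h'' | h'' | h'' <;>
        exact hdist _ _ (by decide) (h' ▸ h'').symm
    · rcases eqcase _ _ _ d3 with h'' | h'' | h'' <;>
        exact hdist _ _ (by decide) (h' ▸ h'').symm
  · -- Omega = 12
    have hN : (x 0 * x 1 * x 2 * x 3).natAbs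
        = (p 1 * p 2 * p 3) * (p 0 * p 2 * p 3) * (p 0 * p 1 * p 3) * (p 0 * p 1 * p 2) := by
      rw [Int.natAbs_mul, Int.natAbs_mul, Int.natAbs_mul, a0, a1, a2, a3]
    rw [← cardFactors_apply, hN]
    have hne : ∀ j, p j ≠ 0 := fun j => (hp j).ne_zero
    rw [cardFactors_mul (by simp [Nat.mul_ne_zero_iff, hne]) (by simp [Nat.mul_ne_zero_iff, hne]),
        cardFactors_mul (by simp [Nat.mul_ne_zero_iff, hne]) (by simp [Nat.mul_ne_zero_iff, hne]),
        cardFactors_mul (by simp [Nat.mul_ne_zero_iff, hne]) (by simp [Nat.mul_ne_zero_iff, hne])]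
    rw [cardFactors_mul (by simp [Nat.mul_ne_zero_iff, hne]) (hne 3), cardFactors_mul (hne 1) (hne 2),
        cardFactors_mul (by simp [Nat.mul_ne_zero_iff, hne]) (hne 3), cardFactors_mul (hne 0) (hne 2),
        cardFactors_mul (by simp [Nat.mul_ne_zero_iff, hne]) (hne 3), cardFactors_mul (hne 0) (hne 1),
        cardFactors_mul (by simp [Nat.mul_ne_zero_iff, hne]) (hne 2), cardFactors_mul (hne 0) (hne 1)]
    simp [cardFactors_apply_prime, hp]
end

section
/- The infinite product ∏_p (1 + 1/(p-1)^3) over all primes p converges to a finite value, and equals the sum ∑_{q=1}^∞ μ(q)^2/φ(q)^3; in particular it is > 1. -/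
open scoped ArithmeticFunction

/-- For odd squarefree `n`, `n ≤ φ(n)²`. -/
private lemma sq7_odd_case : ∀ n : ℕ, Squarefree n → ¬ 2 ∣ n → n ≤ Nat.totient n ^ 2 := by
  intro n
  induction n using Nat.strong_induction_on with
  | _ n ih =>
    intro hsq hodd
    have hn0 : n ≠ 0 := hsq.ne_zero
    rcases eq_or_ne n 1 with h1 | h1
    · simp [h1]
    · set p := n.minFac with hp
      have hpp : p.Prime := Nat.minFac_prime h1
      obtain ⟨m, hm⟩ := Nat.minFac_dvd n
      have hm0 : m ≠ 0 := by rintro rfl; simp at hm; exact hn0 hm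
      have hmn : m < n := by
        have h2 : 2 ≤ p := hpp.two_le
        calc m < 2 * m := by omega
        _ ≤ p * m := by exact Nat.mul_le_mul_right m h2
        _ = n := hm.symm
      have hpm : ¬ p ∣ m := by
        intro hdvd
        obtain ⟨k, hk⟩ := hdvd
        have : p * p ∣ n := ⟨k, by rw [hm, hk]; ring⟩
        exact hpp.not_isUnit (hsq p this)
      have hcop : Nat.Coprime p m := (Nat.Prime.coprime_iff_not_dvd hpp).mpr hpm
      have hmsq : Squarefree m := hsq.squarefree_of_dvd ⟨p, by rw [hm]; ring⟩
      have hmodd : ¬ 2 ∣ m := fun h => hodd (hm ▸ Dvd.dvd.mul_left h p)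
      have hpodd : p ≠ 2 := fun h => hodd (h ▸ hm ▸ Dvd.intro m rfl)
      have hp3 : 3 ≤ p := by have := hpp.two_le; omega
      have hφ : Nat.totient n = (p - 1) * Nat.totient m := by
        rw [hm, Nat.totient_mul hcop, Nat.totient_prime hpp]
      have hple : p ≤ (p - 1) ^ 2 := by
        obtain ⟨k, hk⟩ := Nat.exists_eq_add_of_le hp3
        rw [hk]
        have h2 : 3 + k - 1 = k + 2 := by omega
        rw [h2]; nlinarith
      calc n = p * m := hm
        _ ≤ (p - 1) ^ 2 * Nat.totient m ^ 2 :=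
            Nat.mul_le_mul hple (ih m hmn hmsq hmodd)
        _ = Nat.totient n ^ 2 := by rw [hφ]; ring

/-- For squarefree `n`, `n ≤ 2 φ(n)²`. -/
private lemma sq7_key (n : ℕ) (hsq : Squarefree n) : n ≤ 2 * Nat.totient n ^ 2 := by
  by_cases hodd : 2 ∣ n
  · obtain ⟨m, hm⟩ := hodd
    have hm0 : m ≠ 0 := by rintro rfl; simp at hm; exact hsq.ne_zero hm
    have hmodd : ¬ 2 ∣ m := by
      intro hdvd
      obtain ⟨k, hk⟩ := hdvd
      have : 2 * 2 ∣ n := ⟨k, by rw [hm, hk]; ring⟩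
      exact Nat.prime_two.not_isUnit (hsq 2 this)
    have hcop : Nat.Coprime 2 m := (Nat.Prime.coprime_iff_not_dvd Nat.prime_two).mpr hmodd
    have hmsq : Squarefree m := hsq.squarefree_of_dvd ⟨2, by rw [hm]; ring⟩
    have hφ : Nat.totient n = Nat.totient m := by
      rw [hm, Nat.totient_mul hcop, Nat.totient_two, one_mul]
    calc n = 2 * m := hm
      _ ≤ 2 * Nat.totient m ^ 2 := by
          exact Nat.mul_le_mul_left 2 (by nlinarith [sq7_odd_case m hmsq hmodd])
      _ = 2 * Nat.totient n ^ 2 := by rw [hφ]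
  · have := sq7_odd_case n hsq hodd
    omega

/-- Real version with rpow. -/
private lemma sq7_real (n : ℕ) (hsq : Squarefree n) :
    (n : ℝ) ^ ((3:ℝ)/2) ≤ (2:ℝ) ^ ((3:ℝ)/2) * (Nat.totient n : ℝ) ^ 3 := by
  have h : (n : ℝ) ≤ 2 * (Nat.totient n : ℝ) ^ 2 := by exact_mod_cast sq7_key n hsq
  calc (n : ℝ) ^ ((3:ℝ)/2) ≤ (2 * (Nat.totient n : ℝ) ^ 2) ^ ((3:ℝ)/2) :=
        Real.rpow_le_rpow (n.cast_nonneg) h (by norm_num)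
    _ = (2:ℝ) ^ ((3:ℝ)/2) * ((Nat.totient n : ℝ) ^ 2) ^ ((3:ℝ)/2) :=
        Real.mul_rpow (by norm_num) (by positivity)
    _ = (2:ℝ) ^ ((3:ℝ)/2) * (Nat.totient n : ℝ) ^ 3 := by
        congr 1
        rw [← Real.rpow_natCast ((Nat.totient n : ℝ)) 2, ← Real.rpow_mul (by positivity)]
        rw [show ((2:ℕ):ℝ) * ((3:ℝ)/2) = ((3:ℕ):ℝ) by norm_num, Real.rpow_natCast]

private noncomputable def sq7f : ℕ → ℝ :=
  fun n => (ArithmeticFunction.moebius n : ℝ) ^ 2 / (Nat.totient n : ℝ) ^ 3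

private lemma sq7f_sq (n : ℕ) (hsq : Squarefree n) : sq7f n = 1 / (Nat.totient n : ℝ) ^ 3 := by
  unfold sq7f
  rw [ArithmeticFunction.moebius_apply_of_squarefree hsq]
  push_cast
  rw [← pow_mul, mul_comm, pow_mul]
  norm_num

private lemma sq7f_summable : Summable (fun n => ‖sq7f n‖) := by
  refine Summable.of_nonneg_of_le (f := fun n : ℕ => (2:ℝ) ^ ((3:ℝ)/2) * (1 / (n:ℝ) ^ ((3:ℝ)/2)))
    (fun n => norm_nonneg _) ?_ ?_
  · intro n
    by_cases hsq : Squarefree n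
    · have hn1 : 1 ≤ n := Nat.one_le_iff_ne_zero.mpr hsq.ne_zero
      have hφ : 0 < Nat.totient n := Nat.totient_pos.mpr hn1
      have hφR : (0:ℝ) < (Nat.totient n : ℝ) ^ 3 := by positivity
      have hnR : (0:ℝ) < (n:ℝ) ^ ((3:ℝ)/2) :=
        Real.rpow_pos_of_pos (by exact_mod_cast hn1) _
      rw [sq7f_sq n hsq, Real.norm_of_nonneg (by positivity)]
      show (1:ℝ) / (Nat.totient n : ℝ) ^ 3 ≤ (2:ℝ) ^ ((3:ℝ)/2) * (1 / (n:ℝ) ^ ((3:ℝ)/2))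
      rw [mul_one_div, div_le_div_iff₀ hφR hnR, one_mul]
      exact sq7_real n hsq
    · unfold sq7f
      rw [ArithmeticFunction.moebius_eq_zero_of_not_squarefree hsq]
      simp only [Int.cast_zero, ne_eq, OfNat.ofNat_ne_zero, not_false_eq_true, zero_pow,
        zero_div, norm_zero]
      positivity
  · exact (Real.summable_one_div_nat_rpow.mpr (by norm_num)).mul_left _

/-- The singular series: the product `∏ₚ (1 + 1/(p-1)³)` over primes converges,
equals `∑_q μ(q)²/φ(q)³`, and is greater than 1. -/
theorem stmt_7 :
    Multipliable (fun p : Nat.Primes => (1 + 1 / ((p : ℕ) - 1 : ℝ) ^ 3)) ∧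
    (∏' p : Nat.Primes, (1 + 1 / ((p : ℕ) - 1 : ℝ) ^ 3)) =
      ∑' q : ℕ, ((ArithmeticFunction.moebius q : ℝ) ^ 2 / (Nat.totient q : ℝ) ^ 3) ∧
    1 < ∏' p : Nat.Primes, (1 + 1 / ((p : ℕ) - 1 : ℝ) ^ 3) := by
  have hf1 : sq7f 1 = 1 := by unfold sq7f; simp
  have hf0 : sq7f 0 = 0 := by unfold sq7f; simp
  have hmul : ∀ {m n : ℕ}, m.Coprime n → sq7f (m * n) = sq7f m * sq7f n := by
    intro m n h
    unfold sq7f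
    rw [ArithmeticFunction.isMultiplicative_moebius.map_mul_of_coprime h, Nat.totient_mul h]
    push_cast
    rw [mul_pow, mul_pow, div_mul_div_comm]
  have hasP := EulerProduct.eulerProduct_hasProd hf1 hmul sq7f_summable hf0
  have key : ∀ p : Nat.Primes,
      (∑' e : ℕ, sq7f ((p:ℕ) ^ e)) = 1 + 1 / ((p : ℕ) - 1 : ℝ) ^ 3 := by
    intro p
    have hpp : (p:ℕ).Prime := p.2
    rw [tsum_eq_sum (s := ({0, 1} : Finset ℕ)) ?_]
    · rw [Finset.sum_pair (by norm_num)]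
      rw [pow_zero, pow_one, hf1]
      congr 1
      unfold sq7f
      rw [ArithmeticFunction.moebius_apply_prime hpp, Nat.totient_prime hpp,
        Nat.cast_sub hpp.one_le]
      norm_num
    · intro e he
      simp only [Finset.mem_insert, Finset.mem_singleton] at he
      have he2 : 2 ≤ e := by omega
      have : ¬ Squarefree ((p:ℕ) ^ e) := by
        intro H
        exact hpp.not_isUnit (H (p:ℕ) (by
          calc ((p:ℕ) * (p:ℕ)) = (p:ℕ) ^ 2 := by ring
          _ ∣ (p:ℕ) ^ e := pow_dvd_pow _ he2))
      unfold sq7f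
      rw [ArithmeticFunction.moebius_eq_zero_of_not_squarefree this]
      simp
  rw [show (fun p : Nat.Primes => ∑' e : ℕ, sq7f ((p:ℕ) ^ e)) =
      (fun p : Nat.Primes => 1 + 1 / ((p : ℕ) - 1 : ℝ) ^ 3) from funext key] at hasP
  refine ⟨hasP.multipliable, hasP.tprod_eq, ?_⟩
  rw [hasP.tprod_eq]
  have hsum : Summable sq7f := sq7f_summable.of_norm
  have hle : sq7f 1 + sq7f 2 ≤ ∑' n, sq7f n := by
    have := Summable.sum_le_tsum ({1, 2} : Finset ℕ) (fun i _ => by unfold sq7f; positivity) hsum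
    rwa [Finset.sum_pair (by norm_num)] at this
  have hf2 : sq7f 2 = 1 := by
    unfold sq7f
    rw [ArithmeticFunction.moebius_apply_prime Nat.prime_two, Nat.totient_two]
    norm_num
  show (1:ℝ) < ∑' n, sq7f n
  rw [hf1, hf2] at hle
  linarith
end

section
/- Let ξ_0, ξ_1, ξ_2, ξ_3 be nonzero reals with ξ_0ξ_1ξ_2ξ_3 ≠ 0 and ξ_k + ξ_l ≠ 0 for all k ≠ l, satisfying the Cayley equation 1/ξ_0 + 1/ξ_1 + 1/ξ_2 + 1/ξ_3 = 0 (equivalently ξ_1ξ_2ξ_3 + ξ_0ξ_2ξ_3 + ξ_0ξ_1ξ_3 + ξ_0ξ_1ξ_2 = 0). Define η_j = |c/ξ_j| and β_j = sgn(c/ξ_j), where c is a real cube root of ξ_0ξ_1ξ_2ξ_3. Then each η_j > 0, β_0η_0 + β_1η_1 + β_2η_2 + β_3η_3 = 0, β_kη_k + β_lη_l ≠ 0 for k ≠ l, and β_1β_2β_3 η_1η_2η_3 = ξ_0 (and similarly for the other indices). -/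
/-- Reduction of a real point on the Cayley cubic (off the lines) to targets
`(ηⱼ, βⱼ)` for the four-primes equation, where `c³ = ξ₀ξ₁ξ₂ξ₃`,
`ηⱼ = |c/ξⱼ|` and `βⱼ = sgn(c/ξⱼ)`. -/
theorem stmt_10 (ξ : Fin 4 → ℝ) (c : ℝ)
    (hnz : ∀ j, ξ j ≠ 0)
    (hpair : ∀ k l, k ≠ l → ξ k + ξ l ≠ 0)
    (heq : ∑ i, ∏ j ∈ Finset.univ.erase i, ξ j = 0)
    (hc : c ^ 3 = ∏ j, ξ j) :
    let η : Fin 4 → ℝ := fun j => |c / ξ j|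
    let β : Fin 4 → ℝ := fun j => Real.sign (c / ξ j)
    (∀ j, 0 < η j) ∧
    (∑ j, β j * η j = 0) ∧
    (∀ k l, k ≠ l → β k * η k + β l * η l ≠ 0) ∧
    (∀ i, ∏ j ∈ Finset.univ.erase i, (β j * η j) = ξ i) := by
  intro η β
  have hprod : (∏ j, ξ j) ≠ 0 := Finset.prod_ne_zero_iff.2 fun j _ => hnz j
  have hc0 : c ≠ 0 := by
    intro h; rw [h] at hc; simp at hc; exact hprod hc.symm
  have hβη : ∀ j, β j * η j = c / ξ j := by
    intro j
    show Real.sign (c / ξ j) * |c / ξ j| = c / ξ j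
    rcases lt_trichotomy (c / ξ j) 0 with h | h | h
    · rw [Real.sign_of_neg h, abs_of_neg h]; ring
    · rw [h]; simp
    · rw [Real.sign_of_pos h, abs_of_pos h]; ring
  have hdiv : ∀ j, c / ξ j ≠ 0 := fun j => div_ne_zero hc0 (hnz j)
  have hErase : ∀ i : Fin 4, ∏ j ∈ Finset.univ.erase i, ξ j = c ^ 3 / ξ i := by
    intro i
    have := Finset.prod_erase_mul Finset.univ ξ (Finset.mem_univ i)
    field_simp [hnz i] at this ⊢
    rw [this, hc]
  refine ⟨fun j => abs_pos.2 (hdiv j), ?_, ?_, ?_⟩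
  · have : ∑ j, c / ξ j = (∑ i, ∏ j ∈ Finset.univ.erase i, ξ j) / c ^ 2 := by
      rw [Finset.sum_div]
      refine Finset.sum_congr rfl fun i _ => ?_
      rw [hErase i]
      field_simp [hnz i]
    simp only [hβη]
    rw [this, heq, zero_div]
  · intro k l hkl
    simp only [hβη]
    rw [div_add_div _ _ (hnz k) (hnz l)]
    refine div_ne_zero ?_ (mul_ne_zero (hnz k) (hnz l))
    have : c * ξ l + ξ k * c = c * (ξ k + ξ l) := by ring
    rw [this]
    exact mul_ne_zero hc0 (hpair k l hkl)
  · intro i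
    simp only [hβη]
    rw [Finset.prod_div_distrib, Finset.prod_const, hErase i]
    have hcard : (Finset.univ.erase i).card = 3 := by
      simp [Finset.card_erase_of_mem]
    rw [hcard]
    field_simp
end

section
/- Let ξ = (ξ_0,ξ_1,ξ_2,ξ_3) be a real point on the Fermat cubic surface ξ_0^3+ξ_1^3+ξ_2^3+ξ_3^3 = 0 that does not lie on any of the three lines x_i + x_j = x_k + x_l = 0. Define ζ_0 = (ξ_0+ξ_1+ξ_2+ξ_3)/4, ζ_1 = (ξ_0+ξ_1-ξ_2-ξ_3)/4, ζ_2 = (ξ_0-ξ_1+ξ_2-ξ_3)/4, ζ_3 = (ξ_0-ξ_1-ξ_2+ξ_3)/4. Then ζ_0ζ_2 + 3ζ_1ζ_3 ≠ 0, ζ_2ζ_3 - ζ_0ζ_1 ≠ 0, and ζ_0^2 + 3ζ_3^2 ≠ 0. -/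
lemma aux_sq2 {a b : ℝ} (h : a ^ 2 + b ^ 2 ≤ 0) : a = 0 ∧ b = 0 := by
  constructor <;>
  · rw [← sq_eq_zero_iff]
    nlinarith [sq_nonneg a, sq_nonneg b]

/-- For a nonzero real point `ξ` on the Fermat cubic not lying on any of the
three lines `xᵢ + xⱼ = x_k + x_l = 0`, the transformed coordinates `ζ` satisfy
`ζ₀ζ₂ + 3ζ₁ζ₃ ≠ 0`, `ζ₂ζ₃ - ζ₀ζ₁ ≠ 0` and `ζ₀² + 3ζ₃² ≠ 0`. -/
theorem stmt_11 (ξ0 ξ1 ξ2 ξ3 : ℝ)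
    (hnz : ¬(ξ0 = 0 ∧ ξ1 = 0 ∧ ξ2 = 0 ∧ ξ3 = 0))
    (hcube : ξ0 ^ 3 + ξ1 ^ 3 + ξ2 ^ 3 + ξ3 ^ 3 = 0)
    (hline1 : ¬(ξ0 + ξ1 = 0 ∧ ξ2 + ξ3 = 0))
    (hline2 : ¬(ξ0 + ξ2 = 0 ∧ ξ1 + ξ3 = 0))
    (hline3 : ¬(ξ0 + ξ3 = 0 ∧ ξ1 + ξ2 = 0)) :
    let ζ0 := (ξ0 + ξ1 + ξ2 + ξ3) / 4
    let ζ1 := (ξ0 + ξ1 - ξ2 - ξ3) / 4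
    let ζ2 := (ξ0 - ξ1 + ξ2 - ξ3) / 4
    let ζ3 := (ξ0 - ξ1 - ξ2 + ξ3) / 4
    ζ0 * ζ2 + 3 * ζ1 * ζ3 ≠ 0 ∧ ζ2 * ζ3 - ζ0 * ζ1 ≠ 0 ∧ ζ0 ^ 2 + 3 * ζ3 ^ 2 ≠ 0 := by
  intro ζ0 ζ1 ζ2 ζ3
  simp only [ζ0, ζ1, ζ2, ζ3]
  refine ⟨?_, ?_, ?_⟩
  · intro h
    have hAB : ξ0 ^ 2 - ξ0 * ξ2 + ξ2 ^ 2 = ξ1 ^ 2 - ξ1 * ξ3 + ξ3 ^ 2 := by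
      linear_combination 4 * h
    have hfac : (ξ0 ^ 2 - ξ0 * ξ2 + ξ2 ^ 2) * (ξ0 + ξ1 + ξ2 + ξ3) = 0 := by
      linear_combination hcube + (ξ1 + ξ3) * hAB
    rcases mul_eq_zero.mp hfac with hA | hsum
    · have h02 : ξ0 = 0 ∧ ξ2 = 0 := aux_sq2 (by nlinarith [sq_nonneg (ξ0 - ξ2)])
      have h13 : ξ1 = 0 ∧ ξ3 = 0 := aux_sq2 (by nlinarith [sq_nonneg (ξ1 - ξ3)])
      exact hnz ⟨h02.1, h13.1, h02.2, h13.2⟩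
    · have hz : (ξ0 + ξ1 - ξ2 - ξ3) * (ξ0 - ξ1 - ξ2 + ξ3) = 0 := by
        linear_combination (16 / 3) * h - ((1 / 3) * (ξ0 - ξ1 + ξ2 - ξ3)) * hsum
      rcases mul_eq_zero.mp hz with h1 | h3
      · exact hline1 ⟨by linarith, by linarith⟩
      · exact hline3 ⟨by linarith, by linarith⟩
  · intro h
    have hp : ξ0 * ξ1 = ξ2 * ξ3 := by linear_combination -4 * h
    have hfac : (ξ0 + ξ1 + ξ2 + ξ3) *
        ((ξ0 + ξ1) ^ 2 - (ξ0 + ξ1) * (ξ2 + ξ3) + (ξ2 + ξ3) ^ 2 - 3 * (ξ0 * ξ1)) = 0 := by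
      linear_combination hcube - (3 * (ξ2 + ξ3)) * hp
    rcases mul_eq_zero.mp hfac with hsum | hquad
    · have hq : (ξ0 + ξ2) * (ξ0 + ξ3) = 0 := by
        linear_combination ξ0 * hsum - hp
      rcases mul_eq_zero.mp hq with h2 | h3
      · exact hline2 ⟨h2, by linarith⟩
      · exact hline3 ⟨h3, by linarith⟩
    · have hst : ξ0 + ξ1 = 0 ∧ ξ2 + ξ3 = 0 := aux_sq2 (by
        nlinarith [sq_nonneg (ξ0 - ξ1), sq_nonneg (ξ2 - ξ3),
          sq_nonneg (ξ0 + ξ1 - ξ2 - ξ3)])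
      exact hline1 hst
  · intro h
    have h03 : (ξ0 + ξ1 + ξ2 + ξ3) / 4 = 0 ∧ (ξ0 - ξ1 - ξ2 + ξ3) / 4 = 0 :=
      aux_sq2 (by nlinarith [sq_nonneg ((ξ0 - ξ1 - ξ2 + ξ3) / 4)])
    obtain ⟨ha, hb⟩ := h03
    have ha' : ξ0 + ξ1 + ξ2 + ξ3 = 0 := by linarith
    have hb' : ξ0 - ξ1 - ξ2 + ξ3 = 0 := by linarith
    exact hline3 ⟨by linarith, by linarith⟩
end
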